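/- arXiv:2111.12404 — 6 statements merged into one kernel-verified Lean document; each statement's English description precedes it below -/
import Mathlib

section
/- For every real x > 0, Σ_{k=1}^∞ x^k / (k · Γ(2k+1)) = 2 ∫₀^{√x} (cosh t − 1)/t dt. Equivalently, since E_{2,1}(t) = cosh(√t), the integral Mittag-Leffler function Ei_{2,1}(x) = ∫₀^x (cosh(√t) − 1)/t dt equals −2γ − ln x + 2·Chi(√x), where γ is the Euler–Mascheroni constant and Chi(y) = γ + ln y + ∫₀^y (cosh u − 1)/u du. -/
open Real MeasureTheory
open scoped Nat

/-! Expanding `cosh`, `(cosh t - 1) / t = ∑ t ^ (2k+1) / (2k+2)!`; for `t` between `0` and `b`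
every term is dominated by its value at `|b|`, so the series can be integrated termwise, giving
`∑ b ^ (2k+2) / ((2k+2) (2k+2)!)`. With `b = √x` and `Γ(2k+3) = (2k+2)!` this is half the
Mittag-Leffler series. The substitution `t = u²` turns `Ei₂,₁(x)` into twice the same integral,
and `log √x = (log x) / 2` makes the `γ` and `log` terms of `2 Chi(√x)` cancel. -/

theorem hasSum_cosh_sub_one_div (t : ℝ) :
    HasSum (fun k : ℕ => t ^ (2 * k + 1) / ((2 * k + 2)! : ℝ)) ((cosh t - 1) / t) := by
  have h := (hasSum_nat_add_iff' 1).mpr (hasSum_cosh t)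
  simp only [Finset.range_one, Finset.sum_singleton, mul_zero, pow_zero, Nat.factorial_zero,
    Nat.cast_one, div_one] at h
  have hterm : ∀ k : ℕ, t ^ (2 * (k + 1)) / ((2 * (k + 1))! : ℝ) / t
      = t ^ (2 * k + 1) / ((2 * k + 2)! : ℝ) := by
    intro k
    rcases eq_or_ne t 0 with rfl | ht
    · simp
    · rw [show 2 * (k + 1) = 2 * k + 1 + 1 by ring, pow_succ]
      field_simp
  simpa only [hterm] using h.div_const t

theorem hasSum_integral_cosh_sub_one_div (b : ℝ) :
    HasSum (fun k : ℕ => b ^ (2 * k + 2) / ((2 * k + 2) * (2 * k + 2)!))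
      (∫ t in (0:ℝ)..b, (cosh t - 1) / t) := by
  have hbound : ∀ k : ℕ, ∀ t ∈ Set.uIoc (0:ℝ) b,
      ‖t ^ (2 * k + 1) / ((2 * k + 2)! : ℝ)‖ ≤ |b| ^ (2 * k + 1) / ((2 * k + 2)! : ℝ) := by
    intro k t ht
    rw [norm_div, norm_pow, Real.norm_eq_abs, Real.norm_natCast]
    have habs : |t| ≤ |b| := by
      rcases le_total 0 b with hb | hb
      · rw [Set.uIoc_of_le hb] at ht
        rw [abs_of_pos ht.1, abs_of_nonneg hb]; exact ht.2
      · rw [Set.uIoc_of_ge hb] at ht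
        rw [abs_of_nonpos ht.2, abs_of_nonpos hb]; linarith [ht.1]
    gcongr
  have h := intervalIntegral.hasSum_integral_of_dominated_convergence
    (fun k _ => |b| ^ (2 * k + 1) / ((2 * k + 2)! : ℝ))
    (fun k => (by fun_prop : Continuous fun t : ℝ => t ^ (2 * k + 1) / ((2 * k + 2)! : ℝ))
      |>.aestronglyMeasurable)
    (fun k => ae_of_all _ (hbound k))
    (ae_of_all _ fun _ _ => (hasSum_cosh_sub_one_div |b|).summable)
    (intervalIntegrable_const (μ := volume))
    (ae_of_all _ fun t _ => hasSum_cosh_sub_one_div t)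
  have hterm : ∀ k : ℕ, ∫ t in (0:ℝ)..b, t ^ (2 * k + 1) / ((2 * k + 2)! : ℝ)
      = b ^ (2 * k + 2) / ((2 * k + 2) * (2 * k + 2)!) := by
    intro k
    rw [intervalIntegral.integral_div, integral_pow, zero_pow (by omega), sub_zero, div_div]
    push_cast
    ring
  simpa only [hterm] using h

theorem integral_cosh_sqrt_sub_one_div {x : ℝ} (hx : 0 ≤ x) :
    ∫ t in (0:ℝ)..x, (cosh (√t) - 1) / t = 2 * ∫ u in (0:ℝ)..√x, (cosh u - 1) / u := by
  have hsub := intervalIntegral.integral_comp_mul_deriv_of_deriv_nonneg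
    (g := fun t => (cosh (√t) - 1) / t) (f := fun u : ℝ => u ^ 2) (f' := fun u => 2 * u)
    (a := 0) (b := √x) (by fun_prop) (fun u _ => by simpa using hasDerivAt_pow 2 u)
    (fun u hu => by simp only [min_eq_left (sqrt_nonneg x)] at hu; linarith [hu.1])
  simp only [Function.comp_def, zero_pow two_ne_zero, sq_sqrt hx] at hsub
  rw [← hsub, ← intervalIntegral.integral_const_mul]
  refine intervalIntegral.integral_congr fun u hu => ?_
  have hu : 0 ≤ u := by
    rw [Set.uIcc_of_le (sqrt_nonneg x)] at hu
    exact hu.1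
  rcases hu.eq_or_lt with rfl | hu
  · simp
  · simp only [sqrt_sq hu.le]
    field_simp

/-- `Ei₂,₁(x) = 2·Chi(√x) − 2γ − ln x`. -/
theorem integral_mittagLeffler_two_one (x : ℝ) (hx : 0 < x) :
    ((∑' k : ℕ, x ^ (k + 1) / ((k + 1) * Real.Gamma (2 * (k + 1) + 1)))
        = 2 * ∫ t in (0:ℝ)..Real.sqrt x, (Real.cosh t - 1) / t) ∧
    (∫ t in (0:ℝ)..x, (Real.cosh (Real.sqrt t) - 1) / t
        = -2 * Real.eulerMascheroniConstant - Real.log x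
          + 2 * (Real.eulerMascheroniConstant + Real.log (Real.sqrt x)
              + ∫ u in (0:ℝ)..Real.sqrt x, (Real.cosh u - 1) / u)) := by
  have hterm : ∀ k : ℕ, 2 * (√x ^ (2 * k + 2) / ((2 * k + 2) * ((2 * k + 2)! : ℝ)))
      = x ^ (k + 1) / ((k + 1) * Gamma (2 * (k + 1) + 1)) := by
    intro k
    have hGamma : Gamma (2 * (k + 1) + 1) = (2 * k + 2)! := by
      rw [← Gamma_nat_eq_factorial]
      push_cast
      ring_nf
    rw [hGamma, show 2 * k + 2 = 2 * (k + 1) by ring, pow_mul, sq_sqrt hx.le]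
    field_simp
  refine ⟨?_, ?_⟩
  · rw [← ((hasSum_integral_cosh_sub_one_div √x).mul_left 2).tsum_eq]
    exact tsum_congr fun k => (hterm k).symm
  · rw [integral_cosh_sqrt_sub_one_div hx.le, log_sqrt hx.le]
    ring
end

section
/- Let α ≥ 1 and β > 0 be real numbers and let E_{α,β}(t) = Σ_{k=0}^∞ t^k / Γ(αk+β). Then for every real s > 1, the Laplace transform satisfies ∫₀^∞ e^{−st} E_{α,β}(t) dt = Σ_{k=0}^∞ (k! / Γ(αk+β)) · s^{−(k+1)}, where both the integral and the series converge. -/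
/-!
Integrate the Mittag-Leffler series term by term: `∫₀^∞ tᵏ e^{-st} dt = k! / s^{k+1}`.
The exchange of sum and integral is legitimate as soon as the series of the integrals of the
absolute values converges, and here it does for `s > 1`: monotonicity of `Γ` on `[2, ∞)` gives
`k! = Γ(k + 1) ≤ Γ(αk + β + 1) = (αk + β) Γ(αk + β)`, so the coefficients `k! / Γ(αk + β)`
grow at most linearly.
-/

open Real MeasureTheory Set Filter
open scoped Nat

namespace MeasureTheory

variable {X E ι : Type*} [MeasurableSpace X] {μ : Measure X} [NormedAddCommGroup E]
  [CompleteSpace E] [SecondCountableTopology E] [MeasurableSpace E] [BorelSpace E] [Countable ι]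

theorem integrable_tsum_of_summable_integral_norm {F : ι → X → E}
    (hF_int : ∀ i, Integrable (F i) μ) (hF_sum : Summable fun i ↦ ∫ x, ‖F i x‖ ∂μ) :
    Integrable (fun x ↦ ∑' i, F i x) μ := by
  refine ⟨(AEMeasurable.tsum fun i ↦ (hF_int i).aemeasurable).aestronglyMeasurable, ?_⟩
  have hlintegral : ∑' i, ∫⁻ x, ‖F i x‖ₑ ∂μ = ENNReal.ofReal (∑' i, ∫ x, ‖F i x‖ ∂μ) := by
    rw [ENNReal.ofReal_tsum_of_nonneg (fun i ↦ integral_nonneg fun x ↦ norm_nonneg _) hF_sum]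
    exact tsum_congr fun i ↦ (ofReal_integral_norm_eq_lintegral_enorm (hF_int i)).symm
  calc ∫⁻ x, ‖∑' i, F i x‖ₑ ∂μ ≤ ∫⁻ x, ∑' i, ‖F i x‖ₑ ∂μ :=
        lintegral_mono fun x ↦ enorm_tsum_le_tsum_enorm
    _ = ∑' i, ∫⁻ x, ‖F i x‖ₑ ∂μ := lintegral_tsum fun i ↦ (hF_int i).aemeasurable.enorm
    _ < ⊤ := hlintegral ▸ ENNReal.ofReal_lt_top

end MeasureTheory

section LaplacePowerSeries

variable {s : ℝ}

theorem integrableOn_pow_mul_exp_neg_mul_Ioi (hs : 0 < s) (k : ℕ) :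
    IntegrableOn (fun t ↦ t ^ k * exp (-(s * t))) (Ioi 0) := by
  refine (integrableOn_rpow_mul_exp_neg_mul_rpow (s := k) (neg_one_lt_zero.trans_le k.cast_nonneg)
    one_pos hs).congr_fun (fun t _ ↦ ?_) measurableSet_Ioi
  simp only [rpow_natCast, rpow_one, neg_mul]

theorem integral_pow_mul_exp_neg_mul_Ioi (hs : 0 < s) (k : ℕ) :
    ∫ t in Ioi 0, t ^ k * exp (-(s * t)) = k ! / s ^ (k + 1) := by
  have h := integral_rpow_mul_exp_neg_mul_Ioi (a := k + 1) (by positivity) hs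
  rw [add_sub_cancel_right, Gamma_nat_eq_factorial, ← Nat.cast_succ, rpow_natCast, one_div,
    inv_pow, inv_mul_eq_div] at h
  rw [← h]
  exact setIntegral_congr_fun measurableSet_Ioi fun t _ ↦ by rw [rpow_natCast]

theorem integrableOn_exp_neg_mul_mul_pow (hs : 0 < s) (c : ℝ) (k : ℕ) :
    IntegrableOn (fun t ↦ exp (-(s * t)) * (c * t ^ k)) (Ioi 0) :=
  IntegrableOn.congr_fun ((integrableOn_pow_mul_exp_neg_mul_Ioi hs k).const_mul c)
    (fun t _ ↦ by ring) measurableSet_Ioi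

theorem integral_exp_neg_mul_mul_pow (hs : 0 < s) (c : ℝ) (k : ℕ) :
    ∫ t in Ioi 0, exp (-(s * t)) * (c * t ^ k) = c * k ! / s ^ (k + 1) := by
  simp_rw [show ∀ t : ℝ, exp (-(s * t)) * (c * t ^ k) = c * (t ^ k * exp (-(s * t))) by
    intro t; ring]
  rw [integral_const_mul, integral_pow_mul_exp_neg_mul_Ioi hs, mul_div_assoc]

theorem integral_norm_exp_neg_mul_mul_pow (hs : 0 < s) (c : ℝ) (k : ℕ) :
    ∫ t in Ioi 0, ‖exp (-(s * t)) * (c * t ^ k)‖ = |c| * k ! / s ^ (k + 1) := by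
  rw [← integral_exp_neg_mul_mul_pow hs |c| k]
  refine setIntegral_congr_fun measurableSet_Ioi fun t (ht : 0 < t) ↦ ?_
  simp [abs_of_pos ht]

variable {a : ℕ → ℝ}

theorem integrableOn_exp_neg_mul_tsum_mul_pow (hs : 0 < s)
    (ha : Summable fun k ↦ |a k| * k ! / s ^ (k + 1)) :
    IntegrableOn (fun t ↦ exp (-(s * t)) * ∑' k, a k * t ^ k) (Ioi 0) := by
  simp_rw [← tsum_mul_left]
  exact integrable_tsum_of_summable_integral_norm
    (fun k ↦ integrableOn_exp_neg_mul_mul_pow hs (a k) k)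
    (by simpa only [integral_norm_exp_neg_mul_mul_pow hs] using ha)

theorem integral_exp_neg_mul_tsum_mul_pow (hs : 0 < s)
    (ha : Summable fun k ↦ |a k| * k ! / s ^ (k + 1)) :
    ∫ t in Ioi 0, exp (-(s * t)) * ∑' k, a k * t ^ k = ∑' k, a k * k ! / s ^ (k + 1) := by
  simp_rw [← tsum_mul_left]
  rw [← integral_tsum_of_summable_integral_norm
    (fun k ↦ integrableOn_exp_neg_mul_mul_pow hs (a k) k)
    (by simpa only [integral_norm_exp_neg_mul_mul_pow hs] using ha)]
  exact tsum_congr fun k ↦ integral_exp_neg_mul_mul_pow hs (a k) k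

end LaplacePowerSeries

section MittagLefflerCoefficients

variable {α β : ℝ}

theorem factorial_div_Gamma_mul_add_le (hα : 1 ≤ α) (hβ : 0 ≤ β) {k : ℕ} (hk : 1 ≤ k) :
    (k ! : ℝ) / Gamma (α * k + β) ≤ α * k + β := by
  have hk' : (1 : ℝ) ≤ k := by exact_mod_cast hk
  have hpos : 0 < α * k + β := by nlinarith
  rw [div_le_iff₀ (Gamma_pos_of_pos hpos), ← Gamma_add_one hpos.ne', ← Gamma_nat_eq_factorial]
  exact Gamma_strictMonoOn_Ici.monotoneOn (by simp only [mem_Ici]; linarith)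
    (by simp only [mem_Ici]; nlinarith) (by nlinarith)

theorem summable_factorial_div_Gamma_mul_add_div_pow (hα : 1 ≤ α) (hβ : 0 ≤ β) {s : ℝ}
    (hs : 1 < s) : Summable fun k : ℕ ↦ (k ! : ℝ) / Gamma (α * k + β) / s ^ (k + 1) := by
  have hr : ‖s⁻¹‖ < 1 := by
    rw [norm_inv, Real.norm_of_nonneg (by linarith)]
    exact inv_lt_one_of_one_lt₀ hs
  have hbound : Summable fun k : ℕ ↦ (α * k + β) * s⁻¹ ^ (k + 1) :=
    ((((summable_pow_mul_geometric_of_norm_lt_one 1 hr).mul_left α).add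
      ((summable_geometric_of_norm_lt_one hr).mul_left β)).mul_right s⁻¹).congr
      fun k ↦ by ring
  refine hbound.of_norm_bounded_eventually_nat ((eventually_ge_atTop 1).mono fun k hk ↦ ?_)
  have hk' : (1 : ℝ) ≤ k := by exact_mod_cast hk
  have hΓ : 0 < Gamma (α * k + β) := Gamma_pos_of_pos (by nlinarith)
  rw [Real.norm_of_nonneg (by positivity), inv_pow, ← div_eq_mul_inv]
  gcongr
  exact factorial_div_Gamma_mul_add_le hα hβ hk

end MittagLefflerCoefficients

/-- Laplace transform of the two-parameter Mittag-Leffler function. -/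
theorem laplace_mittagLeffler (α β s : ℝ) (hα : 1 ≤ α) (hβ : 0 < β) (hs : 1 < s) :
    IntegrableOn
      (fun t : ℝ => Real.exp (-(s * t)) * ∑' k : ℕ, t ^ k / Real.Gamma (α * k + β))
      (Set.Ioi 0) ∧
    Summable (fun k : ℕ => (Nat.factorial k : ℝ) / Real.Gamma (α * k + β) / s ^ (k + 1)) ∧
    (∫ t in Set.Ioi (0:ℝ),
        Real.exp (-(s * t)) * ∑' k : ℕ, t ^ k / Real.Gamma (α * k + β))
      = ∑' k : ℕ, (Nat.factorial k : ℝ) / Real.Gamma (α * k + β) / s ^ (k + 1) := by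
  have hs₀ : 0 < s := by linarith
  have hsum := summable_factorial_div_Gamma_mul_add_div_pow hα hβ.le hs
  have habs : ∀ k : ℕ, |(Gamma (α * k + β))⁻¹| = (Gamma (α * k + β))⁻¹ := fun k ↦
    abs_of_pos (inv_pos.2 (Gamma_pos_of_pos (by positivity)))
  have ha : Summable fun k : ℕ ↦ |(Gamma (α * k + β))⁻¹| * k ! / s ^ (k + 1) := by
    simpa only [habs, inv_mul_eq_div] using hsum
  refine ⟨?_, hsum, ?_⟩
  · simpa only [inv_mul_eq_div] using integrableOn_exp_neg_mul_tsum_mul_pow hs₀ ha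
  · simpa only [inv_mul_eq_div] using integral_exp_neg_mul_tsum_mul_pow hs₀ ha
end

section
/- For every real x ≥ 0, the Mittag-Leffler function E_{1/2,1} satisfies Σ_{k=0}^∞ x^k / Γ(k/2 + 1) = e^{x²} · (1 + erf(x)), where erf(x) = (2/√π) ∫₀^x e^{−u²} du. -/
/-!
Split the series into even and odd powers. The even terms `x ^ (2n) / n!` sum to `exp (x²)`.
For the odd terms, `Γ(n + 3/2) ∫₀¹ (1 - t²)ⁿ dt = √π n! / 2` (both sides satisfy the recursion
coming from `Γ(s + 1) = s Γ(s)` and an integration by parts), so after the substitution `u = x t`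
the odd term is `(2/√π) ∫₀ˣ (x² - u²)ⁿ / n! du`; summing under the integral gives
`(2/√π) ∫₀ˣ exp (x² - u²) du = exp (x²) erf x`.
-/

open Real MeasureTheory
open scoped Nat

theorem Real.hasSum_pow_div_factorial (y : ℝ) : HasSum (fun n : ℕ => y ^ n / n !) (exp y) := by
  rw [exp_eq_exp_ℝ]
  exact NormedSpace.expSeries_div_hasSum_exp y

theorem hasSum_intervalIntegral_pow_div_factorial {f : ℝ → ℝ} (hf : Continuous f) (a b : ℝ) :
    HasSum (fun n : ℕ => ∫ t in a..b, f t ^ n / n !) (∫ t in a..b, exp (f t)) := by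
  refine intervalIntegral.hasSum_integral_of_dominated_convergence (fun n t => |f t| ^ n / n !)
    (fun n => (by fun_prop : Continuous fun t => f t ^ n / n !).aestronglyMeasurable)
    (fun n => ae_of_all _ fun t _ => by simp [norm_div])
    (ae_of_all _ fun t _ => Real.summable_pow_div_factorial _) ?_
    (ae_of_all _ fun t _ => hasSum_pow_div_factorial (f t))
  simp_rw [fun t => (hasSum_pow_div_factorial |f t|).tsum_eq]
  exact (by fun_prop : Continuous fun t => exp |f t|).intervalIntegrable a b

theorem integral_one_sub_sq_pow_succ (n : ℕ) :
    (2 * (n : ℝ) + 3) * ∫ t in (0 : ℝ)..1, (1 - t ^ 2) ^ (n + 1)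
      = (2 * (n : ℝ) + 2) * ∫ t in (0 : ℝ)..1, (1 - t ^ 2) ^ n := by
  have hderiv : ∀ t ∈ Set.uIcc (0 : ℝ) 1, HasDerivAt (fun t : ℝ => t * (1 - t ^ 2) ^ (n + 1))
      ((2 * n + 3) * (1 - t ^ 2) ^ (n + 1) - (2 * n + 2) * (1 - t ^ 2) ^ n) t := by
    intro t _
    have hsq : HasDerivAt (fun t : ℝ => 1 - t ^ 2) (-(2 * t)) t := by
      simpa using (hasDerivAt_pow 2 t).const_sub 1
    refine ((hasDerivAt_id' t).fun_mul (hsq.fun_pow (n + 1))).congr_deriv ?_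
    push_cast [Nat.add_sub_cancel]
    ring
  have hFTC := intervalIntegral.integral_eq_sub_of_hasDerivAt hderiv
    ((by fun_prop : Continuous fun t : ℝ =>
      (2 * n + 3) * (1 - t ^ 2) ^ (n + 1) - (2 * n + 2) * (1 - t ^ 2) ^ n).intervalIntegrable 0 1)
  rw [intervalIntegral.integral_sub ((by fun_prop : Continuous _).intervalIntegrable 0 1)
      ((by fun_prop : Continuous _).intervalIntegrable 0 1),
    intervalIntegral.integral_const_mul, intervalIntegral.integral_const_mul] at hFTC
  simp only [one_pow, sub_self, zero_pow (Nat.succ_ne_zero n), mul_zero] at hFTC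
  linarith

theorem Gamma_mul_integral_one_sub_sq_pow (n : ℕ) :
    Gamma (n + 3 / 2) * ∫ t in (0 : ℝ)..1, (1 - t ^ 2) ^ n = √π * n ! / 2 := by
  induction n with
  | zero =>
    rw [show ((0 : ℕ) : ℝ) + 3 / 2 = 1 / 2 + 1 by norm_num, Gamma_add_one (by norm_num),
      Gamma_one_half_eq]
    simp only [pow_zero, intervalIntegral.integral_const, sub_zero, smul_eq_mul, mul_one,
      Nat.factorial_zero, Nat.cast_one]
    ring
  | succ n ih =>
    have hrec := integral_one_sub_sq_pow_succ n
    rw [show ((n + 1 : ℕ) : ℝ) + 3 / 2 = (n + 3 / 2) + 1 by push_cast; ring,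
      Gamma_add_one (by positivity), Nat.factorial_succ]
    push_cast
    linear_combination (Gamma (n + 3 / 2) / 2) * hrec + (n + 1) * ih

theorem integral_sq_sub_sq_pow (x : ℝ) (n : ℕ) :
    ∫ u in (0 : ℝ)..x, (x ^ 2 - u ^ 2) ^ n
      = x ^ (2 * n + 1) * ∫ t in (0 : ℝ)..1, (1 - t ^ 2) ^ n := by
  have hsubst := intervalIntegral.smul_integral_comp_mul_left
    (fun u : ℝ => (x ^ 2 - u ^ 2) ^ n) x (a := 0) (b := 1)
  have hscale : ∀ t : ℝ, (x ^ 2 - (x * t) ^ 2) ^ n = x ^ (2 * n) * (1 - t ^ 2) ^ n := fun t => by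
    rw [show x ^ 2 - (x * t) ^ 2 = x ^ 2 * (1 - t ^ 2) by ring, mul_pow, ← pow_mul]
  simp only [mul_zero, mul_one, smul_eq_mul, hscale, intervalIntegral.integral_const_mul] at hsubst
  rw [← hsubst]
  ring

theorem pow_div_Gamma_add_three_halves (x : ℝ) (n : ℕ) :
    x ^ (2 * n + 1) / Gamma (n + 3 / 2)
      = 2 / √π * ∫ u in (0 : ℝ)..x, (x ^ 2 - u ^ 2) ^ n / n ! := by
  have hΓ : Gamma (n + 3 / 2) ≠ 0 := (Gamma_pos_of_pos (by positivity)).ne'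
  have hI : ∫ t in (0 : ℝ)..1, (1 - t ^ 2) ^ n = √π * n ! / 2 / Gamma (n + 3 / 2) := by
    rw [← Gamma_mul_integral_one_sub_sq_pow, mul_div_cancel_left₀ _ hΓ]
  rw [intervalIntegral.integral_div, integral_sq_sub_sq_pow, hI]
  have hπ : √π ≠ 0 := by positivity
  field_simp

theorem hasSum_pow_two_mul_div_Gamma_nat_add_one (x : ℝ) :
    HasSum (fun n : ℕ => x ^ (2 * n) / Gamma (n + 1)) (exp (x ^ 2)) := by
  simpa only [Gamma_nat_eq_factorial, pow_mul] using hasSum_pow_div_factorial (x ^ 2)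

theorem hasSum_pow_two_mul_add_one_div_Gamma_add_three_halves (x : ℝ) :
    HasSum (fun n : ℕ => x ^ (2 * n + 1) / Gamma (n + 3 / 2))
      (exp (x ^ 2) * (2 / √π * ∫ u in (0 : ℝ)..x, exp (-u ^ 2))) := by
  simp_rw [pow_div_Gamma_add_three_halves]
  have hfactor : ∫ u in (0 : ℝ)..x, exp (x ^ 2 - u ^ 2)
      = exp (x ^ 2) * ∫ u in (0 : ℝ)..x, exp (-u ^ 2) := by
    simp_rw [sub_eq_add_neg (x ^ 2), exp_add, intervalIntegral.integral_const_mul]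
  rw [mul_left_comm, ← hfactor]
  exact (hasSum_intervalIntegral_pow_div_factorial
    (by fun_prop : Continuous fun u : ℝ => x ^ 2 - u ^ 2) 0 x).mul_left (2 / √π)

theorem mittagLeffler_half_one_general (x : ℝ) :
    (∑' k : ℕ, x ^ k / Real.Gamma ((k : ℝ) / 2 + 1))
      = Real.exp (x ^ 2) *
        (1 + (2 / Real.sqrt π) * ∫ u in (0:ℝ)..x, Real.exp (-u ^ 2)) := by
  have heven : ∀ n : ℕ, ((2 * n : ℕ) : ℝ) / 2 + 1 = n + 1 := fun n => by push_cast; ring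
  have hodd : ∀ n : ℕ, ((2 * n + 1 : ℕ) : ℝ) / 2 + 1 = n + 3 / 2 := fun n => by push_cast; ring
  refine (HasSum.even_add_odd ?_ ?_).tsum_eq.trans (mul_one_add _ _).symm
  · simpa only [heven] using hasSum_pow_two_mul_div_Gamma_nat_add_one x
  · simpa only [hodd] using hasSum_pow_two_mul_add_one_div_Gamma_add_three_halves x

/-- `E_{1/2,1}(x) = e^{x²}(1 + erf x)` for `x ≥ 0`. -/
theorem mittagLeffler_half_one (x : ℝ) (hx : 0 ≤ x) :
    (∑' k : ℕ, x ^ k / Real.Gamma ((k : ℝ) / 2 + 1))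
      = Real.exp (x ^ 2) *
        (1 + (2 / Real.sqrt π) * ∫ u in (0:ℝ)..x, Real.exp (-u ^ 2)) :=
  mittagLeffler_half_one_general x
end

section
/- For every real s > 0, the Laplace transform of the Mittag-Leffler function E_{2,1}(t) = cosh(√t) satisfies ∫₀^∞ e^{−st} cosh(√t) dt = 1/s + (√π / 2) · s^{−3/2} · e^{1/(4s)} · erf(1/(2√s)), where erf(y) = (2/√π) ∫₀^y e^{−u²} du. -/
open Real MeasureTheory Set Filter Topology

/-!
Substituting `t = x²` turns the transform into `∫₀^∞ 2x e^{-sx²} cosh x dx`. One integration by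
parts against `x e^{-sx²} = -(e^{-sx²})' / (2s)` leaves `(1/s) ∫₀^∞ e^{-sx²} sinh x dx`, and completing
the square, `-sx² ± x = 1/(4s) - (√s x ∓ 1/(2√s))²`, makes that a difference of two shifted Gaussian
integrals whose tails cancel, leaving `∫_{-1/(2√s)}^{1/(2√s)} e^{-u²} du`. All of this is encoded
in one explicit primitive of the integrand, so the fundamental theorem of calculus on `[0, ∞)` applies.
-/

/-- `(√π / 2) erf y`. -/
noncomputable def gaussianPrimitive (y : ℝ) : ℝ := ∫ u in (0:ℝ)..y, exp (-u ^ 2)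

theorem hasDerivAt_gaussianPrimitive (y : ℝ) : HasDerivAt gaussianPrimitive (exp (-y ^ 2)) y :=
  have hc : Continuous fun u : ℝ => exp (-u ^ 2) := by fun_prop
  intervalIntegral.integral_hasDerivAt_right (hc.intervalIntegrable _ _)
    hc.aestronglyMeasurable.stronglyMeasurableAtFilter hc.continuousAt

theorem hasDerivAt_gaussianPrimitive_comp_affine (m c x : ℝ) :
    HasDerivAt (fun x => gaussianPrimitive (m * x + c)) (m * exp (-(m * x + c) ^ 2)) x := by
  refine ((hasDerivAt_gaussianPrimitive _).comp x
    (((hasDerivAt_id x).const_mul m).add_const c)).congr_deriv ?_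
  simp only [id, mul_one, mul_comm]

theorem gaussianPrimitive_neg (y : ℝ) : gaussianPrimitive (-y) = -gaussianPrimitive y := by
  have h := intervalIntegral.integral_comp_neg (a := 0) (b := y) fun u => exp (-u ^ 2)
  simp only [neg_sq, neg_zero] at h
  rw [gaussianPrimitive, intervalIntegral.integral_symm, ← h, gaussianPrimitive]

theorem tendsto_gaussianPrimitive_atTop : Tendsto gaussianPrimitive atTop (𝓝 (√π / 2)) := by
  have h := integral_gaussian_Ioi 1
  simp only [neg_one_mul, div_one] at h
  rw [← h]
  exact intervalIntegral_tendsto_integral_Ioi 0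
    (by simpa using (integrable_exp_neg_mul_sq one_pos).integrableOn) tendsto_id

theorem integral_Ioi_two_mul_smul_comp_sq {E : Type*} [NormedAddCommGroup E] [NormedSpace ℝ E]
    (g : ℝ → E) : ∫ x in Ioi 0, (2 * x) • g (x ^ 2) = ∫ t in Ioi 0, g t := by
  rw [← integral_comp_rpow_Ioi_of_pos (g := g) two_pos]
  refine setIntegral_congr_fun measurableSet_Ioi fun x _ => ?_
  norm_num [rpow_two]

section

variable {s : ℝ}

theorem exp_neg_sq_sqrt_mul_add (hs : 0 < s) (b x : ℝ) :
    exp (-(√s * x + b / (2 * √s)) ^ 2) =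
      exp (-(s * x ^ 2)) * exp (-(b * x)) / exp (b ^ 2 / (4 * s)) := by
  have hs' : √s ≠ 0 := (sqrt_pos.2 hs).ne'
  rw [← exp_add, ← exp_sub]
  congr 1
  field_simp
  rw [sq_sqrt hs.le]
  ring

/-- Primitive of `x ↦ 2x e^{-sx²} cosh x`: the boundary term of the integration by parts plus the
completed-square form of `(1/s) ∫ e^{-sx²} sinh x dx`. -/
noncomputable def coshGaussPrimitive (s x : ℝ) : ℝ :=
  -(exp (-(s * x ^ 2)) * cosh x) / s + exp (1 / (4 * s)) / (2 * s * √s) *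
    (gaussianPrimitive (√s * x - 1 / (2 * √s)) - gaussianPrimitive (√s * x + 1 / (2 * √s)))

theorem hasDerivAt_coshGaussPrimitive (hs : 0 < s) (x : ℝ) :
    HasDerivAt (coshGaussPrimitive s) (2 * x * exp (-(s * x ^ 2)) * cosh x) x := by
  have hgauss : HasDerivAt (fun x => exp (-(s * x ^ 2)) * cosh x)
      (-(2 * s * x) * exp (-(s * x ^ 2)) * cosh x + exp (-(s * x ^ 2)) * sinh x) x := by
    refine ((((hasDerivAt_pow 2 x).const_mul s).fun_neg.exp).fun_mul
      (hasDerivAt_cosh x)).congr_deriv ?_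
    simp only [Nat.cast_ofNat, Nat.reduceSub, pow_one]
    ring
  have hminus := hasDerivAt_gaussianPrimitive_comp_affine (√s) (-(1 / (2 * √s))) x
  have hplus := hasDerivAt_gaussianPrimitive_comp_affine (√s) (1 / (2 * √s)) x
  simp only [← sub_eq_add_neg] at hminus
  have h := (hgauss.fun_neg.div_const s).add
    ((hminus.sub hplus).const_mul (exp (1 / (4 * s)) / (2 * s * √s)))
  refine h.congr_deriv ?_
  have hm := exp_neg_sq_sqrt_mul_add hs (-1) x
  have hp := exp_neg_sq_sqrt_mul_add hs 1 x
  simp only [neg_div, ← sub_eq_add_neg, neg_one_mul, neg_neg, one_mul, even_two, Even.neg_pow,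
    one_pow] at hm hp
  rw [hm, hp, sinh_eq, cosh_eq]
  have hs' : √s ≠ 0 := (sqrt_pos.2 hs).ne'
  field_simp
  ring

theorem tendsto_exp_neg_mul_sq_mul_exp_atTop (hs : 0 < s) (b : ℝ) :
    Tendsto (fun x => exp (-(s * x ^ 2)) * exp (b * x)) atTop (𝓝 0) := by
  have h : Tendsto (fun x => x * (s * x - b)) atTop atTop :=
    tendsto_id.atTop_mul_atTop₀
      (tendsto_atTop_add_const_right _ (-b) (tendsto_id.const_mul_atTop hs))
  refine (tendsto_exp_atBot.comp (tendsto_neg_atTop_atBot.comp h)).congr fun x => ?_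
  simp only [Function.comp_apply, ← exp_add]
  ring_nf

theorem tendsto_exp_neg_mul_sq_mul_cosh_atTop (hs : 0 < s) :
    Tendsto (fun x => exp (-(s * x ^ 2)) * cosh x) atTop (𝓝 0) := by
  have h := ((tendsto_exp_neg_mul_sq_mul_exp_atTop hs 1).add
    (tendsto_exp_neg_mul_sq_mul_exp_atTop hs (-1))).div_const 2
  simp only [add_zero, zero_div] at h
  refine h.congr fun x => ?_
  rw [cosh_eq]
  ring_nf

theorem tendsto_coshGaussPrimitive_atTop (hs : 0 < s) :
    Tendsto (coshGaussPrimitive s) atTop (𝓝 0) := by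
  have hlin (c : ℝ) : Tendsto (fun x => √s * x + c) atTop atTop :=
    tendsto_atTop_add_const_right _ c (tendsto_id.const_mul_atTop (sqrt_pos.2 hs))
  have h := (tendsto_exp_neg_mul_sq_mul_cosh_atTop hs).neg.div_const s |>.add
    (((tendsto_gaussianPrimitive_atTop.comp (hlin (-(1 / (2 * √s))))).sub
      (tendsto_gaussianPrimitive_atTop.comp (hlin (1 / (2 * √s))))).const_mul
        (exp (1 / (4 * s)) / (2 * s * √s)))
  simp only [neg_zero, zero_div, sub_self, mul_zero, add_zero] at h
  refine h.congr fun x => ?_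
  simp only [coshGaussPrimitive, Function.comp_apply, sub_eq_add_neg]

theorem coshGaussPrimitive_zero (s : ℝ) :
    coshGaussPrimitive s 0 =
      -(1 / s) - exp (1 / (4 * s)) / (s * √s) * gaussianPrimitive (1 / (2 * √s)) := by
  simp only [coshGaussPrimitive, zero_pow two_ne_zero, mul_zero, neg_zero, exp_zero, cosh_zero,
    zero_sub, zero_add, gaussianPrimitive_neg]
  ring

theorem rpow_neg_three_div_two (hs : 0 ≤ s) : s ^ (-(3:ℝ) / 2) = (s * √s)⁻¹ := by
  rw [neg_div, rpow_neg hs, show (3:ℝ) / 2 = 1 + 1 / 2 by norm_num, rpow_add' hs (by norm_num),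
    rpow_one, sqrt_eq_rpow]

end

/-- Laplace transform of `E₂,₁(t) = cosh √t`. -/
theorem laplace_mittagLeffler_two_one (s : ℝ) (hs : 0 < s) :
    (∫ t in Set.Ioi (0:ℝ), Real.exp (-(s * t)) * Real.cosh (Real.sqrt t))
      = 1 / s + (Real.sqrt π / 2) * s ^ (-(3:ℝ) / 2) * Real.exp (1 / (4 * s)) *
          ((2 / Real.sqrt π) *
            ∫ u in (0:ℝ)..(1 / (2 * Real.sqrt s)), Real.exp (-u ^ 2)) := by
  have hsub : (∫ t in Ioi (0:ℝ), exp (-(s * t)) * cosh √t)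
      = ∫ x in Ioi (0:ℝ), 2 * x * exp (-(s * x ^ 2)) * cosh x := by
    rw [← integral_Ioi_two_mul_smul_comp_sq]
    refine setIntegral_congr_fun measurableSet_Ioi fun x (hx : 0 < x) => ?_
    rw [smul_eq_mul, sqrt_sq hx.le]
    ring
  have hnonneg : ∀ x ∈ Ioi (0:ℝ), 0 ≤ 2 * x * exp (-(s * x ^ 2)) * cosh x :=
    fun x (hx : 0 < x) => by positivity
  rw [hsub, integral_Ioi_of_hasDerivAt_of_nonneg' (fun x _ => hasDerivAt_coshGaussPrimitive hs x)
    hnonneg (tendsto_coshGaussPrimitive_atTop hs), coshGaussPrimitive_zero,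
    rpow_neg_three_div_two hs.le, ← gaussianPrimitive]
  have hπ : √π ≠ 0 := (sqrt_pos.2 pi_pos).ne'
  field_simp
  ring
end

section
/- For every real x, the Wright function W_{−1/2,1} satisfies Σ_{k=0}^∞ x^k / (k! · Γ(1 − k/2)) = 1 + erf(x/2), where erf(y) = (2/√π) ∫₀^y e^{−u²} du and terms with 1 − k/2 a nonpositive integer are interpreted as 0 (the convention 1/Γ(z) = 0 at the poles of Γ). -/
/-!
The even terms `k = 2j ≥ 2` vanish, since `1 - k/2 = 1 - j` is a pole of `Γ`, and the `k = 0`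
term is `1`. For the odd terms, `Γ(1/2 - m) (2m)! = (-4)^m m! √π` turns `k = 2m + 1` into
`2/√π · (-1)^m (x/2)^(2m+1) / ((2m+1) m!)`, which is the termwise integral over `[0, x/2]` of
the exponential series of `-u²`, justified by dominated convergence.
-/

open Real intervalIntegral
open scoped Nat

namespace Real

theorem Gamma_one_half_sub_nat_mul_factorial (m : ℕ) :
    Gamma (1 / 2 - m) * (2 * m)! = (-4) ^ m * m ! * √π := by
  induction m with
  | zero => norm_num [Gamma_one_half_eq]
  | succ m ih =>
    have hrec : Gamma (1 / 2 - (m + 1) + 1) = (1 / 2 - (m + 1)) * Gamma (1 / 2 - (m + 1)) :=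
      Gamma_add_one (by linarith [m.cast_nonneg (α := ℝ)])
    rw [show (1 / 2 : ℝ) - (m + 1) + 1 = 1 / 2 - m by ring] at hrec
    rw [hrec] at ih
    rw [show 2 * (m + 1) = 2 * m + 1 + 1 by ring, Nat.factorial_succ, Nat.factorial_succ,
      Nat.factorial_succ, pow_succ]
    push_cast
    linear_combination (-4 * (m + 1 : ℝ)) * ih

end Real

theorem hasSum_integral_exp_neg_sq (t : ℝ) :
    HasSum (fun m : ℕ => (-1) ^ m * t ^ (2 * m + 1) / ((2 * m + 1) * m !))
      (∫ u in (0:ℝ)..t, exp (-u ^ 2)) := by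
  have hterm (m : ℕ) : ∫ u in (0:ℝ)..t, (-1) ^ m / m ! * u ^ (2 * m) =
      (-1) ^ m * t ^ (2 * m + 1) / ((2 * m + 1) * m !) := by
    rw [integral_const_mul, integral_pow]
    push_cast
    field_simp
    simp
  simp only [← hterm]
  refine hasSum_integral_of_dominated_convergence
    (F := fun (m : ℕ) (u : ℝ) => (-1) ^ m / m ! * u ^ (2 * m)) (fun m _ => (t ^ 2) ^ m / m !)
    (fun m => by fun_prop) (fun m => ?_) ?_ (by simp) ?_
  · refine Filter.Eventually.of_forall fun u hu => ?_
    have hut : u ^ 2 ≤ t ^ 2 :=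
      sq_le_sq.2 (by simpa using Set.abs_sub_left_of_mem_uIcc (Set.uIoc_subset_uIcc hu))
    calc ‖(-1) ^ m / m ! * u ^ (2 * m)‖ = (u ^ 2) ^ m / m ! := by
          simp [pow_mul, div_eq_inv_mul]
      _ ≤ (t ^ 2) ^ m / m ! := by gcongr ?_ ^ m / _
  · exact Filter.Eventually.of_forall fun u _ => summable_pow_div_factorial _
  · refine Filter.Eventually.of_forall fun u _ => ?_
    rw [exp_eq_exp_ℝ]
    convert! NormedSpace.expSeries_div_hasSum_exp (-u ^ 2) using 2 with m
    rw [neg_pow, pow_mul]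
    ring

theorem wright_term_even_eq_zero (x : ℝ) {k : ℕ} (hk : k ≠ 0) :
    x ^ (2 * k) / ((2 * k)! * Gamma (1 - ((2 * k : ℕ) : ℝ) / 2)) = 0 := by
  obtain ⟨j, rfl⟩ := Nat.exists_eq_succ_of_ne_zero hk
  rw [show 1 - ((2 * (j + 1) : ℕ) : ℝ) / 2 = -j by push_cast; ring, Gamma_neg_nat_eq_zero,
    mul_zero, div_zero]

theorem wright_term_odd (x : ℝ) (m : ℕ) :
    x ^ (2 * m + 1) / ((2 * m + 1)! * Gamma (1 - ((2 * m + 1 : ℕ) : ℝ) / 2)) =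
      2 / √π * ((-1) ^ m * (x / 2) ^ (2 * m + 1) / ((2 * m + 1) * m !)) := by
  have hΓ := Gamma_one_half_sub_nat_mul_factorial m
  rw [show 1 - ((2 * m + 1 : ℕ) : ℝ) / 2 = 1 / 2 - m by push_cast; ring, Nat.factorial_succ,
    Nat.cast_mul, show ((2 * m + 1 : ℕ) : ℝ) * (2 * m)! * Gamma (1 / 2 - m) =
      (2 * m + 1) * (Gamma (1 / 2 - m) * (2 * m)!) by push_cast; ring, hΓ,
    show ((-4 : ℝ)) ^ m = (-1) ^ m * 2 ^ (2 * m) by rw [pow_mul, ← mul_pow]; norm_num]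
  have hsign : ((-1 : ℝ) ^ m) ^ 2 = 1 := by rw [← pow_mul, pow_mul', neg_one_sq, one_pow]
  field_simp
  rw [hsign, div_pow, pow_succ 2 (2 * m)]
  field_simp

/-- The Wright function `W₋₁/₂,₁(x) = 1 + erf(x/2)`. -/
theorem wright_neg_half_one (x : ℝ) :
    (∑' k : ℕ, x ^ k / (Nat.factorial k * Real.Gamma (1 - (k : ℝ) / 2)))
      = 1 + (2 / Real.sqrt π) * ∫ u in (0:ℝ)..(x / 2), Real.exp (-u ^ 2) := by
  set f : ℕ → ℝ := fun k => x ^ k / (k ! * Gamma (1 - (k : ℝ) / 2))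
  have heven : HasSum (fun k => f (2 * k)) 1 := by
    convert hasSum_single 0 fun k hk => wright_term_even_eq_zero x hk
    simp
  have hodd : HasSum (fun m => f (2 * m + 1))
      (2 / √π * ∫ u in (0:ℝ)..(x / 2), exp (-u ^ 2)) := by
    simpa only [f, wright_term_odd] using (hasSum_integral_exp_neg_sq (x / 2)).mul_left (2 / √π)
  exact (heven.even_add_odd hodd).tsum_eq
end

section
/- For every real x, the Mainardi function M_{1/2} satisfies Σ_{k=0}^∞ (−x)^k / (k! · Γ((1−k)/2)) = e^{−x²/4} / √π, where terms with (1−k)/2 a nonpositive integer are interpreted as 0 (the convention 1/Γ(z) = 0 at the poles of Γ). -/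
/-!
On even indices `k = 2n` the Gamma factor is `Γ(1/2 - n) = (-4)ⁿ n! √π / (2n)!`, so the terms
become `(-x²/4)ⁿ / (n! √π)`, the exponential series of `e^{-x²/4}` divided by `√π`; on odd
indices `k = 2n + 1` the Gamma factor is taken at the pole `-n`, where Mathlib's `Γ` is `0`, and
the terms vanish.
-/

open Real Nat

theorem Real.Gamma_one_half_sub_nat_mul_factorial_s14 (n : ℕ) :
    Gamma (1 / 2 - n) * (2 * n)! = (-4) ^ n * n ! * √π := by
  induction n with
  | zero => simp [-one_div, Gamma_one_half_eq]
  | succ n ih =>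
    have hs : (1 / 2 - (n + 1) : ℝ) ≠ 0 := by
      intro h
      linarith [n.cast_nonneg (α := ℝ)]
    have hrec : Gamma (1 / 2 - n) = (1 / 2 - (n + 1)) * Gamma (1 / 2 - (n + 1)) := by
      rw [← Gamma_add_one hs]
      ring_nf
    rw [hrec] at ih
    rw [show 2 * (n + 1) = 2 * n + 1 + 1 by ring, factorial_succ, factorial_succ, factorial_succ]
    push_cast
    linear_combination (-4 * ((n : ℝ) + 1)) * ih

theorem mainardi_half_term_even (x : ℝ) (n : ℕ) :
    (-x) ^ (2 * n) / ((2 * n)! * Gamma ((1 - ((2 * n : ℕ) : ℝ)) / 2))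
      = (-x ^ 2 / 4) ^ n / n ! / √π := by
  rw [show (1 - ((2 * n : ℕ) : ℝ)) / 2 = 1 / 2 - n by push_cast; ring,
    mul_comm ((2 * n)! : ℝ), Gamma_one_half_sub_nat_mul_factorial_s14, pow_mul, neg_sq, neg_div, ← div_neg, div_pow]
  field_simp

theorem mainardi_half_term_odd (x : ℝ) (n : ℕ) :
    (-x) ^ (2 * n + 1) / ((2 * n + 1)! * Gamma ((1 - ((2 * n + 1 : ℕ) : ℝ)) / 2)) = 0 := by
  rw [show (1 - ((2 * n + 1 : ℕ) : ℝ)) / 2 = -n by push_cast; ring, Gamma_neg_nat_eq_zero,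
    mul_zero, div_zero]

/-- The Mainardi function `M₁/₂(x) = e^{−x²/4}/√π`. -/
theorem mainardi_half (x : ℝ) :
    (∑' k : ℕ, (-x) ^ k / (Nat.factorial k * Real.Gamma ((1 - (k : ℝ)) / 2)))
      = Real.exp (-x ^ 2 / 4) / Real.sqrt π := by
  conv_rhs => rw [← add_zero (rexp (-x ^ 2 / 4) / √π)]
  refine (HasSum.even_add_odd ?_ ?_).tsum_eq
  · simp only [mainardi_half_term_even, exp_eq_exp_ℝ]
    exact (NormedSpace.expSeries_div_hasSum_exp _).div_const _
  · simp only [mainardi_half_term_odd]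
    exact hasSum_zero
end
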